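/- arXiv:2112.03567 — 2 statements merged into one kernel-verified Lean document; each statement's English description precedes it below -/
import Mathlib

section
/- The number π / arccos(-1/4) is irrational. -/
open Real

theorem irrational_div_pi_of_cos_eq_rat {θ : ℝ} (hcos : ∃ q : ℚ, cos θ = q)
    (hniven : cos θ ∉ ({-1, -1 / 2, 0, 1 / 2, 1} : Set ℝ)) : Irrational (θ / π) := by
  rintro ⟨r, hr⟩
  exact hniven (niven ⟨r, by rw [hr, div_mul_cancel₀ θ pi_ne_zero]⟩ hcos)

theorem stmt_1 : Irrational (π / Real.arccos (-1/4)) := by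
  have hcos : cos (arccos (-1 / 4)) = -1 / 4 := cos_arccos (by norm_num) (by norm_num)
  rw [← inv_div]
  refine (irrational_div_pi_of_cos_eq_rat ⟨-1 / 4, ?_⟩ ?_).inv <;> rw [hcos] <;> norm_num
end

section
/- The function u₁(r,θ) = √(1155/(8π)) · (3cos⁵r - 4cos³r + cos r) · sin(2θ) on the spherical triangle {(r,θ) : 0 < θ < π/2, 0 < r < π/2} satisfies the Laplace–Beltrami eigenvalue equation -(1/sin r)∂_r(sin r ∂_r u) - (1/sin²r)∂²_θ u = 30 u. -/
/-!
The eigenfunction separates as `u₁ r θ = C · P(cos r) · sin 2θ` with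
`P(x) = 3x⁵ - 4x³ + x = (x² - 1)(3x³ - x)`, a multiple of the associated Legendre function `P₅²`.
Separating variables, the angular factor contributes `-∂²_θ sin 2θ = 4 sin 2θ`, and the radial factor
solves the associated Legendre equation of degree `ℓ = 5` and order `m = 2`, whose eigenvalue is
`ℓ(ℓ + 1) = 30`; in the variable `r` this is a polynomial identity in `sin r` and `cos r` modulo
`sin² r + cos² r = 1`.
-/

open Real

noncomputable def u₁ (r θ : ℝ) : ℝ :=
  Real.sqrt (1155 / (8 * π)) *
    (3 * Real.cos r ^ 5 - 4 * Real.cos r ^ 3 + Real.cos r) * Real.sin (2 * θ)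

lemma laplacian_separated (c : ℝ) (f g : ℝ → ℝ) (r θ : ℝ) :
    -(1 / sin r) * deriv (fun r' => sin r' * deriv (fun r'' => c * f r'' * g θ) r') r
        - (1 / sin r ^ 2) * deriv (deriv fun θ' => c * f r * g θ') θ
      = c * g θ * (-(1 / sin r) * deriv (fun r' => sin r' * deriv f r') r)
        - c * f r / sin r ^ 2 * deriv (deriv g) θ := by
  have hflux : (fun r' => sin r' * deriv (fun r'' => c * f r'' * g θ) r')
      = fun r' => c * g θ * (sin r' * deriv f r') := by
    funext r'
    rw [deriv_mul_const_field', deriv_const_mul_field']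
    ring
  rw [hflux, deriv_const_mul_field', deriv_const_mul_field', deriv_const_mul_field']
  ring

noncomputable def radialProfile (r : ℝ) : ℝ := 3 * cos r ^ 5 - 4 * cos r ^ 3 + cos r

lemma hasDerivAt_radialProfile (r : ℝ) :
    HasDerivAt radialProfile (-(15 * cos r ^ 4 - 12 * cos r ^ 2 + 1) * sin r) r := by
  have hcos := hasDerivAt_cos r
  exact ((((hcos.pow 5).const_mul 3).sub ((hcos.pow 3).const_mul 4)).add hcos).congr_deriv
    (by push_cast; ring)

lemma deriv_radialProfile :
    deriv radialProfile = fun r => -(15 * cos r ^ 4 - 12 * cos r ^ 2 + 1) * sin r :=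
  funext fun r => (hasDerivAt_radialProfile r).deriv

lemma hasDerivAt_sin_mul_deriv_radialProfile (r : ℝ) :
    HasDerivAt (fun r => sin r * deriv radialProfile r)
      (-2 * sin r * cos r * (15 * cos r ^ 4 - 12 * cos r ^ 2 + 1)
        + sin r ^ 3 * (60 * cos r ^ 3 - 24 * cos r)) r := by
  have hcos := hasDerivAt_cos r
  have hQ := (((hcos.pow 4).const_mul 15).sub ((hcos.pow 2).const_mul 12)).add_const 1
  rw [deriv_radialProfile]
  exact ((hasDerivAt_sin r).mul (hQ.neg.mul (hasDerivAt_sin r))).congr_deriv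
    (by simp only [Pi.neg_apply, Pi.mul_apply, Pi.sub_apply, Pi.pow_apply]; push_cast; ring)

lemma radialProfile_legendre {r : ℝ} (hs : sin r ≠ 0) :
    -(1 / sin r) * deriv (fun r => sin r * deriv radialProfile r) r
      + 4 / sin r ^ 2 * radialProfile r = 30 * radialProfile r := by
  rw [(hasDerivAt_sin_mul_deriv_radialProfile r).deriv, radialProfile]
  field_simp
  linear_combination
    ((24 * cos r - 60 * cos r ^ 3) * sin r ^ 2 + 12 * cos r ^ 3 - 4 * cos r) * sin_sq_add_cos_sq r

lemma deriv_deriv_sin_two_mul (θ : ℝ) :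
    deriv (deriv fun θ => sin (2 * θ)) θ = -4 * sin (2 * θ) := by
  have hlin (x : ℝ) : HasDerivAt (fun θ => 2 * θ) 2 x := by
    simpa using (hasDerivAt_id x).const_mul (2 : ℝ)
  have hderiv : deriv (fun θ => sin (2 * θ)) = fun θ => cos (2 * θ) * 2 :=
    funext fun x => (hlin x).sin.deriv
  rw [hderiv, ((hlin θ).cos.mul_const 2).deriv]
  ring

theorem stmt_5_general (r θ : ℝ) (hr : r ∈ Set.Ioo (0 : ℝ) (π / 2)) :
    -(1 / Real.sin r) *
        deriv (fun r' => Real.sin r' * deriv (fun r'' => u₁ r'' θ) r') r -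
      (1 / Real.sin r ^ 2) * deriv (deriv (fun θ' => u₁ r θ')) θ = 30 * u₁ r θ := by
  have hs : sin r ≠ 0 := (sin_pos_of_pos_of_lt_pi hr.1 (by linarith [hr.2, pi_pos])).ne'
  refine (laplacian_separated √(1155 / (8 * π)) radialProfile (fun θ => sin (2 * θ)) r θ).trans ?_
  rw [deriv_deriv_sin_two_mul, u₁, ← radialProfile]
  linear_combination √(1155 / (8 * π)) * sin (2 * θ) * radialProfile_legendre hs

theorem stmt_5 (r θ : ℝ) (hr : r ∈ Set.Ioo (0 : ℝ) (π / 2))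
    (hθ : θ ∈ Set.Ioo (0 : ℝ) (π / 2)) :
    -(1 / Real.sin r) *
        deriv (fun r' => Real.sin r' * deriv (fun r'' => u₁ r'' θ) r') r -
      (1 / Real.sin r ^ 2) * deriv (deriv (fun θ' => u₁ r θ')) θ = 30 * u₁ r θ :=
  stmt_5_general r θ hr
end
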